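/- Semi-discrete energy dissipation identity for the non-staggered energy-based DG method in one dimension with periodic boundary conditions: With the notation of the context, if φ_j = w_j and ψ_j = v_j for every j ∈ ZMod N, then B(w,v;w,v) = − β·c⁴ · Σ_{j ∈ ZMod N} (w_{j−1}(h) − w_j(0))² − τ · Σ_{j ∈ ZMod N} (v_{j−1}(h) − v_j(0))². In particular B(w,v;w,v) ≤ 0 for all α ∈ ℝ and β, τ ≥ 0. -/

import Mathlib

open Polynomial

/-- Squared L² norm of a broken (piecewise polynomial) function on a periodic grid
of `N` elements each of width `h`, in local coordinates `s ∈ [0,h]`. -/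
noncomputable def brokenNormSq (N : ℕ) [NeZero N] (h : ℝ)
    (p : ZMod N → Polynomial ℝ) : ℝ :=
  ∑ j : ZMod N, ∫ s in (0:ℝ)..h, (p j).eval s ^ 2

/-- The numerical flux `H_j` of the non-staggered energy-based DG method. -/
noncomputable def Hflux (N : ℕ) [NeZero N] (h c α β : ℝ)
    (w v : ZMod N → Polynomial ℝ) (j : ZMod N) : ℝ :=
  α * (v (j - 1)).eval h + (1 - α) * (v j).eval 0
    - β * c ^ 2 * ((w (j - 1)).eval h - (w j).eval 0)

/-- The numerical flux `G_j` of the non-staggered energy-based DG method. -/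
noncomputable def Gflux (N : ℕ) [NeZero N] (h c α τ : ℝ)
    (w v : ZMod N → Polynomial ℝ) (j : ZMod N) : ℝ :=
  (1 - α) * (w (j - 1)).eval h + α * (w j).eval 0
    - τ / c ^ 2 * ((v (j - 1)).eval h - (v j).eval 0)

/-- The non-staggered energy-based DG bilinear form `B(w,v;φ,ψ)`. -/
noncomputable def Bform (N : ℕ) [NeZero N] (h c α β τ : ℝ)
    (w v φ ψ : ZMod N → Polynomial ℝ) : ℝ :=
  c ^ 2 * ∑ j : ZMod N,
    ((∫ s in (0:ℝ)..h,
        ((φ j).eval s * (derivative (v j)).eval s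
          - (derivative (ψ j)).eval s * (w j).eval s))
      + (ψ j).eval h * Gflux N h c α τ w v (j + 1)
      - (ψ j).eval 0 * Gflux N h c α τ w v j
      + (φ j).eval h * (Hflux N h c α β w v (j + 1) - (v j).eval h)
      - (φ j).eval 0 * (Hflux N h c α β w v j - (v j).eval 0))

/-- Semi-discrete energy dissipation identity for the non-staggered energy-based DG
method with periodic boundary conditions. -/
theorem nonstaggered_energy_dissipation
    (N : ℕ) [NeZero N] (hN : 1 ≤ N) (h c : ℝ) (hh : 0 < h) (hc : 0 < c)
    (qu qv : ℕ) (hqu : 1 ≤ qu) (α β τ : ℝ) (hβ : 0 ≤ β) (hτ : 0 ≤ τ)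
    (w v : ZMod N → Polynomial ℝ)
    (hw : ∀ j, (w j).natDegree ≤ qu - 1)
    (hv : ∀ j, (v j).natDegree ≤ qv) :
    Bform N h c α β τ w v w v =
        -(β * c ^ 4) * ∑ j : ZMod N, ((w (j - 1)).eval h - (w j).eval 0) ^ 2
          - τ * ∑ j : ZMod N, ((v (j - 1)).eval h - (v j).eval 0) ^ 2
      ∧ Bform N h c α β τ w v w v ≤ 0 := by
  have hcne : c ≠ 0 := hc.ne'
  set g : ZMod N → ℝ := fun k =>
    (v (k - 1)).eval h * Gflux N h c α τ w v k
      + (w (k - 1)).eval h * (Hflux N h c α β w v k - (v (k - 1)).eval h) with hg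
  set e : ZMod N → ℝ := fun j =>
    (v j).eval 0 * Gflux N h c α τ w v j
      + (w j).eval 0 * (Hflux N h c α β w v j - (v j).eval 0) with he
  have hint : ∀ j : ZMod N, (∫ s in (0:ℝ)..h,
      ((w j).eval s * (derivative (v j)).eval s
        - (derivative (v j)).eval s * (w j).eval s)) = 0 := by
    intro j; simp [mul_comm]
  have h1 : Bform N h c α β τ w v w v = c ^ 2 * ∑ j : ZMod N, (g (j + 1) - e j) := by
    unfold Bform
    congr 1
    apply Finset.sum_congr rfl
    intro j _
    rw [hint j]
    simp only [hg, he, add_sub_cancel_right]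
    ring
  have h2 : ∑ j : ZMod N, (g (j + 1) - e j) = ∑ j : ZMod N, (g j - e j) := by
    rw [Finset.sum_sub_distrib, Finset.sum_sub_distrib]
    congr 1
    exact Fintype.sum_equiv (Equiv.addRight (1 : ZMod N)) _ _ (fun j => rfl)
  have h3 : ∀ j : ZMod N, g j - e j =
      -(β * c ^ 2) * ((w (j - 1)).eval h - (w j).eval 0) ^ 2
        - τ / c ^ 2 * ((v (j - 1)).eval h - (v j).eval 0) ^ 2 := by
    intro j
    simp only [hg, he]
    unfold Hflux Gflux
    field_simp
    ring
  have main : Bform N h c α β τ w v w v =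
      -(β * c ^ 4) * ∑ j : ZMod N, ((w (j - 1)).eval h - (w j).eval 0) ^ 2
        - τ * ∑ j : ZMod N, ((v (j - 1)).eval h - (v j).eval 0) ^ 2 := by
    rw [h1, h2, Finset.sum_congr rfl (fun j _ => h3 j), Finset.sum_sub_distrib,
      ← Finset.mul_sum, ← Finset.mul_sum]
    field_simp
  refine ⟨main, ?_⟩
  rw [main]
  have hS1 : (0:ℝ) ≤ ∑ j : ZMod N, ((w (j - 1)).eval h - (w j).eval 0) ^ 2 :=
    Finset.sum_nonneg fun j _ => sq_nonneg _
  have hS2 : (0:ℝ) ≤ ∑ j : ZMod N, ((v (j - 1)).eval h - (v j).eval 0) ^ 2 :=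
    Finset.sum_nonneg fun j _ => sq_nonneg _
  have hc4 : (0:ℝ) ≤ c ^ 4 := by positivity
  nlinarith [mul_nonneg (mul_nonneg hβ hc4) hS1, mul_nonneg hτ hS2]
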